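/- Let H: [0,T) → ℝ satisfy the Riccati inequality H' + H²/(m−1) + Ric̄(γ',γ') ≤ 0 along a unit-speed geodesic γ, and suppose Ric̄ ≥ −Hess̄ f(γ',γ') − (1/(m−1))((f∘γ)')² (the CD(0,1) condition Ric̄_f¹ ≥ 0 evaluated on γ'). Then H_f := H − (f∘γ)' satisfies H_f' ≤ −H_f²/(m−1) − (2/(m−1))(f∘γ)' H_f, and hence λ(t) = e^{2f(γ(t))/(m−1)} H_f(t) satisfies dλ/ds ≤ −λ²/(m−1) in the reparametrized variable s(t) = ∫₀^t e^{−2f(γ(τ))/(m−1)}dτ. -/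

import Mathlib

/-!
Writing `c = m - 1` and `H_f = H - f'`, the Riccati inequality and the `CD(0,1)` bound give
`H_f' = H' - f'' ≤ -H²/c - Ric - f'' ≤ (f'² - H²)/c`, which is the claimed inequality after
substituting `H = H_f + f'`. Its linear term `-(2/c) f' H_f` is absorbed by the integrating
factor `e^{2f/c}`: for `λ = e^{2f/c} H_f` one gets `λ' = e^{2f/c} (H_f' + (2/c) f' H_f) ≤ -λ² e^{-2f/c}/c`,
and `e^{-2f/c} = ds/dt`.
-/

open Real

lemma deriv_sub_le_of_riccati_of_cd {c r t : ℝ} {H φ : ℝ → ℝ}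
    (hH : DifferentiableAt ℝ H t) (hφ : DifferentiableAt ℝ φ t)
    (hRiccati : deriv H t + H t ^ 2 / c + r ≤ 0) (hCD : -deriv φ t - φ t ^ 2 / c ≤ r) :
    deriv (fun τ => H τ - φ τ) t ≤ -(H t - φ t) ^ 2 / c - 2 / c * φ t * (H t - φ t) := by
  have hshift : -(H t - φ t) ^ 2 / c - 2 / c * φ t * (H t - φ t) = (φ t ^ 2 - H t ^ 2) / c := by
    ring
  rw [deriv_fun_sub hH hφ, hshift, sub_div]
  linarith

lemma deriv_exp_mul_le_of_riccati {c t : ℝ} {F u : ℝ → ℝ}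
    (hF : DifferentiableAt ℝ F t) (hu : DifferentiableAt ℝ u t)
    (h : deriv u t ≤ -u t ^ 2 / c - 2 / c * deriv F t * u t) :
    deriv (fun τ => exp (2 * F τ / c) * u τ) t
      ≤ -((exp (2 * F t / c) * u t) ^ 2 / c) * exp (-2 * F t / c) := by
  have hexp : HasDerivAt (fun τ => exp (2 * F τ / c))
      (exp (2 * F t / c) * (2 * deriv F t / c)) t :=
    ((hF.hasDerivAt.const_mul 2).div_const c).exp
  have hinv : exp (-2 * F t / c) = (exp (2 * F t / c))⁻¹ := by
    rw [← exp_neg, neg_mul, neg_div]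
  rw [(hexp.fun_mul hu.hasDerivAt).deriv]
  calc exp (2 * F t / c) * (2 * deriv F t / c) * u t + exp (2 * F t / c) * deriv u t
      = exp (2 * F t / c) * (deriv u t + 2 / c * deriv F t * u t) := by ring
    _ ≤ exp (2 * F t / c) * (-u t ^ 2 / c) :=
        mul_le_mul_of_nonneg_left (by linarith) (exp_pos _).le
    _ = -((exp (2 * F t / c) * u t) ^ 2 / c) * exp (-2 * F t / c) := by
        rw [hinv]
        field_simp

theorem riccati_reparametrization_general
    (m : ℕ) (T : ℝ)
    (H f Ric : ℝ → ℝ)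
    (hHdiff : ∀ t ∈ Set.Ico (0:ℝ) T, DifferentiableAt ℝ H t)
    (hfdiff : ∀ t ∈ Set.Ico (0:ℝ) T, DifferentiableAt ℝ f t)
    (hf'diff : ∀ t ∈ Set.Ico (0:ℝ) T, DifferentiableAt ℝ (deriv f) t)
    (hRiccati : ∀ t ∈ Set.Ico (0:ℝ) T,
      deriv H t + (H t)^2/((m:ℝ) - 1) + Ric t ≤ 0)
    (hCD : ∀ t ∈ Set.Ico (0:ℝ) T,
      -(deriv (deriv f) t) - (deriv f t)^2/((m:ℝ) - 1) ≤ Ric t) :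
    (∀ t ∈ Set.Ico (0:ℝ) T,
      deriv (fun τ => H τ - deriv f τ) t
        ≤ -(H t - deriv f t)^2/((m:ℝ) - 1)
          - 2/((m:ℝ) - 1) * deriv f t * (H t - deriv f t)) ∧
    (∀ t ∈ Set.Ico (0:ℝ) T,
      deriv (fun τ => Real.exp (2 * f τ/((m:ℝ) - 1)) * (H τ - deriv f τ)) t
        ≤ -((Real.exp (2 * f t/((m:ℝ) - 1)) * (H t - deriv f t))^2/((m:ℝ) - 1))
          * Real.exp (-2 * f t/((m:ℝ) - 1))) := by
  have hHf : ∀ t ∈ Set.Ico (0:ℝ) T, deriv (fun τ => H τ - deriv f τ) t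
      ≤ -(H t - deriv f t) ^ 2 / ((m:ℝ) - 1)
        - 2 / ((m:ℝ) - 1) * deriv f t * (H t - deriv f t) := fun t ht =>
    deriv_sub_le_of_riccati_of_cd (hHdiff t ht) (hf'diff t ht) (hRiccati t ht) (hCD t ht)
  exact ⟨hHf, fun t ht => deriv_exp_mul_le_of_riccati (hfdiff t ht)
    ((hHdiff t ht).fun_sub (hf'diff t ht)) (hHf t ht)⟩

/-- along a unit-speed geodesic, if `H` satisfies the
Riccati inequality `H' + H²/(m−1) + Ric̄(γ',γ') ≤ 0` and the `CD(0,1)`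
condition `Ric̄(γ',γ') ≥ −f'' − (f')²/(m−1)` holds, then
`H_f = H − f'` satisfies
`H_f' ≤ −H_f²/(m−1) − (2/(m−1)) f' H_f`, and
`λ(t) = e^{2f(t)/(m−1)} H_f(t)` satisfies `dλ/ds ≤ −λ²/(m−1)` in the
variable `s` with `ds/dt = e^{−2f(t)/(m−1)}`, i.e.
`λ'(t) ≤ −(λ(t)²/(m−1)) e^{−2f(t)/(m−1)}`. -/
theorem riccati_reparametrization
    (m : ℕ) (hm : 3 ≤ m) (T : ℝ) (hT : 0 < T)
    (H f Ric : ℝ → ℝ)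
    (hHdiff : ∀ t ∈ Set.Ico (0:ℝ) T, DifferentiableAt ℝ H t)
    (hfdiff : ∀ t ∈ Set.Ico (0:ℝ) T, DifferentiableAt ℝ f t)
    (hf'diff : ∀ t ∈ Set.Ico (0:ℝ) T, DifferentiableAt ℝ (deriv f) t)
    (hRiccati : ∀ t ∈ Set.Ico (0:ℝ) T,
      deriv H t + (H t)^2/((m:ℝ) - 1) + Ric t ≤ 0)
    (hCD : ∀ t ∈ Set.Ico (0:ℝ) T,
      -(deriv (deriv f) t) - (deriv f t)^2/((m:ℝ) - 1) ≤ Ric t) :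
    (∀ t ∈ Set.Ico (0:ℝ) T,
      deriv (fun τ => H τ - deriv f τ) t
        ≤ -(H t - deriv f t)^2/((m:ℝ) - 1)
          - 2/((m:ℝ) - 1) * deriv f t * (H t - deriv f t)) ∧
    (∀ t ∈ Set.Ico (0:ℝ) T,
      deriv (fun τ => Real.exp (2 * f τ/((m:ℝ) - 1)) * (H τ - deriv f τ)) t
        ≤ -((Real.exp (2 * f t/((m:ℝ) - 1)) * (H t - deriv f t))^2/((m:ℝ) - 1))
          * Real.exp (-2 * f t/((m:ℝ) - 1))) :=
  riccati_reparametrization_general m T H f Ric hHdiff hfdiff hf'diff hRiccati hCD
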